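/- Let Γ ⊆ (0,1] be a set satisfying the dcc. Then there exists a finite subset Γ_f ⊆ Γ such that every finite multiset of elements of Γ whose sum equals 2 consists entirely of elements of Γ_f. (The combinatorial content of the dimension-one case of the Weak Finiteness Proposition 4.1 of the paper: for a boundary B = Σ b_j P_j on ℙ¹ with K+B ≡ 0 one has Σ b_j = 2.) -/

import Mathlib

/-! Since `Γ` is well-ordered and nonnegative, the additive monoid it generates is
partially well-ordered (Higman). If `b` occurs in a multiset of elements of `Γ` with
sum `2`, then `(b, 2 - b)` lies on the antidiagonal of `Γ` and that monoid over `2`,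
and an antidiagonal of two partially well-ordered sets is finite. -/

/-- The type order on types (finite sequences of reals):
`x ≤ y` iff `y` is shorter than `x`, or they have the same length and
`x` is pointwise `≤ y`. -/
def TypeLE (x y : List ℝ) : Prop :=
  y.length < x.length ∨ List.Forall₂ (· ≤ ·) x y

/-- Strict version of the type order. -/
def TypeLT (x y : List ℝ) : Prop :=
  TypeLE x y ∧ x ≠ y

/-- A set of types satisfies the acc if there is no infinite strictly
increasing sequence of its elements. -/
def TypesACC (S : Set (List ℝ)) : Prop :=
  ¬ ∃ f : ℕ → List ℝ, (∀ n, f n ∈ S) ∧ ∀ n, TypeLT (f n) (f (n + 1))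

/-- A set of reals satisfies the dcc if there is no infinite strictly
decreasing sequence of its elements. -/
def SetDCC (Γ : Set ℝ) : Prop :=
  ¬ ∃ f : ℕ → ℝ, (∀ n, f n ∈ Γ) ∧ ∀ n, f (n + 1) < f n

/-- A set of reals satisfies the acc if there is no infinite strictly
increasing sequence of its elements. -/
def SetACC (Γ : Set ℝ) : Prop :=
  ¬ ∃ f : ℕ → ℝ, (∀ n, f n ∈ Γ) ∧ ∀ n, f n < f (n + 1)

open Set

theorem SetDCC.isPWO {Γ : Set ℝ} (hΓ : SetDCC Γ) : Γ.IsPWO := by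
  rw [isPWO_iff_isWF, isWF_iff_no_descending_seq]
  exact fun f hf hmem => hΓ ⟨f, hmem, fun n => hf n.lt_succ_self⟩

theorem Multiset.mem_image_fst_antidiagonal_closure {α : Type*} [AddCommMonoid α]
    [DecidableEq α] {s : Set α} {M : Multiset α} (hM : ∀ x ∈ M, x ∈ s) {b : α} (hb : b ∈ M) :
    b ∈ Prod.fst '' s.antidiagonal (AddSubmonoid.closure s) M.sum :=
  ⟨(b, (M.erase b).sum),
    ⟨hM b hb,
      AddSubmonoid.multiset_sum_mem _ _ fun x hx =>
        AddSubmonoid.subset_closure (hM x (Multiset.mem_of_mem_erase hx)),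
      Multiset.sum_erase hb⟩,
    rfl⟩

theorem Set.IsPWO.finite_image_fst_antidiagonal_closure {α : Type*} [AddCommMonoid α]
    [PartialOrder α] [IsOrderedCancelAddMonoid α] {s : Set α} (hs : s.IsPWO)
    (hpos : ∀ x ∈ s, 0 ≤ x) (a : α) :
    (Prod.fst '' s.antidiagonal (AddSubmonoid.closure s) a).Finite :=
  (AddAntidiagonal.finite_of_isPWO hs (hs.addSubmonoid_closure hpos) a).image _

/-- If `Γ ⊆ (0,1]` satisfies the dcc, then there is a finite subset
`Γ_f ⊆ Γ` such that every finite multiset of elements of `Γ` summing to `2`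
consists entirely of elements of `Γ_f`. -/
theorem weak_finiteness_dim_one (Γ : Set ℝ) (hsub : Γ ⊆ Set.Ioc 0 1)
    (hΓ : SetDCC Γ) :
    ∃ Γf : Set ℝ, Γf ⊆ Γ ∧ Γf.Finite ∧
      ∀ M : Multiset ℝ, (∀ b ∈ M, b ∈ Γ) → M.sum = 2 → ∀ b ∈ M, b ∈ Γf := by
  refine ⟨Prod.fst '' Γ.antidiagonal (AddSubmonoid.closure Γ) 2,
    fun _ ⟨x, hx, hb⟩ => hb ▸ hx.1,
    (SetDCC.isPWO hΓ).finite_image_fst_antidiagonal_closure (fun x hx => (hsub hx).1.le) 2, ?_⟩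
  rintro M hM hsum b hb
  exact hsum ▸ Multiset.mem_image_fst_antidiagonal_closure hM hb
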